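/- There are infinitely many triples (a, b, c) of positive integers with a² + b² = c², such that a, b and c are all practical numbers and gcd(a, b, c) = 6. In particular, for every nonnegative integer k, the triple x = 3(3^(3^k·70) − 1), y = 6·3^(3^k·35), z = 3(3^(3^k·70) + 1) satisfies x² + y² = z², gcd(x, y, z) = 6, and x, y, z are all practical. -/
import Mathlib

/-- A positive integer `m` is practical if every `n` with `1 ≤ n ≤ m` is a sum of
distinct positive divisors of `m`. -/
def Practical (m : ℕ) : Prop :=
  0 < m ∧ ∀ n : ℕ, 1 ≤ n → n ≤ m → ∃ s : Finset ℕ, s ⊆ m.divisors ∧ ∑ d ∈ s, d = n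

lemma practical_one : Practical 1 := by
  refine ⟨one_pos, fun n h1 h2 => ?_⟩
  have hn : n = 1 := le_antisymm h2 h1
  subst hn
  exact ⟨{1}, by simp [Nat.divisors_one]⟩

lemma practical_step {m q n : ℕ} (hm : Practical m) (hq : 0 < q)
    (hqm : q ≤ m + 1) (hn : m * q = n) : Practical n := by
  subst hn
  obtain ⟨hmpos, hrep⟩ := hm
  refine ⟨Nat.mul_pos hmpos hq, fun n h1 h2 => ?_⟩
  have hmq0 : m * q ≠ 0 := by positivity
  have hna : n / q * q + n % q = n := Nat.div_add_mod' n q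
  have hrq : n % q < q := Nat.mod_lt _ hq
  have ham : n / q ≤ m := by
    have := Nat.div_le_div_right (c := q) h2
    rwa [Nat.mul_div_cancel _ hq] at this
  have hrm : n % q ≤ m := by omega
  have hsubdiv : m.divisors ⊆ (m * q).divisors :=
    Nat.divisors_subset_of_dvd hmq0 (dvd_mul_right m q)
  rcases Nat.eq_zero_or_pos (n / q) with ha0 | hapos
  · rw [ha0, zero_mul, zero_add] at hna
    obtain ⟨s, hs, hsum⟩ := hrep n h1 (by omega)
    exact ⟨s, hs.trans hsubdiv, hsum⟩
  · obtain ⟨S, hS, hSsum⟩ := hrep _ hapos ham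
    have hSq : ∀ d ∈ S.image (· * q), d ∈ (m * q).divisors := by
      intro d hd
      simp only [Finset.mem_image] at hd
      obtain ⟨e, he, rfl⟩ := hd
      have : e ∣ m := (Nat.mem_divisors.mp (hS he)).1
      exact Nat.mem_divisors.mpr ⟨mul_dvd_mul this dvd_rfl, hmq0⟩
    have hSqsum : ∑ d ∈ S.image (· * q), d = (n / q) * q := by
      rw [Finset.sum_image (fun x _ y _ hxy => Nat.eq_of_mul_eq_mul_right hq hxy),
        ← Finset.sum_mul, hSsum]
    rcases Nat.eq_zero_or_pos (n % q) with hr0 | hrpos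
    · refine ⟨S.image (· * q), fun d hd => hSq d hd, ?_⟩
      rw [hSqsum]; omega
    · obtain ⟨T, hT, hTsum⟩ := hrep _ hrpos hrm
      have hTsmall : ∀ t ∈ T, t ≤ n % q := by
        intro t ht
        rw [← hTsum]
        exact Finset.single_le_sum (fun i _ => Nat.zero_le i) ht
      have hdisj : Disjoint (S.image (· * q)) T := by
        rw [Finset.disjoint_left]
        intro d hd hdT
        simp only [Finset.mem_image] at hd
        obtain ⟨e, he, rfl⟩ := hd
        have he1 : 1 ≤ e := Nat.pos_of_mem_divisors (hS he)
        have h2' : e * q ≤ n % q := hTsmall _ hdT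
        nlinarith
      refine ⟨S.image (· * q) ∪ T, ?_, ?_⟩
      · intro d hd
        rcases Finset.mem_union.mp hd with h | h
        · exact hSq d h
        · exact hsubdiv (hT h)
      · rw [Finset.sum_union hdisj, hSqsum, hTsum]; omega

lemma practical_two : Practical 2 :=
  practical_step (q := 2) practical_one (by norm_num) (by norm_num) (by norm_num)

lemma practical_X0 : Practical (3 * (3 ^ 70 - 1)) := by
  have p1 := practical_two
  have p2 : Practical 4 := practical_step (q := 2) p1 (by norm_num) (by norm_num) (by norm_num)
  have p3 : Practical 8 := practical_step (q := 2) p2 (by norm_num) (by norm_num) (by norm_num)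
  have p4 : Practical 24 := practical_step (q := 3) p3 (by norm_num) (by norm_num) (by norm_num)
  have p5 : Practical 264 := practical_step (q := 11) p4 (by norm_num) (by norm_num) (by norm_num)
  have p6 : Practical 2904 := practical_step (q := 11) p5 (by norm_num) (by norm_num) (by norm_num)
  have p7 : Practical 177144 := practical_step (q := 61) p6 (by norm_num) (by norm_num) (by norm_num)
  have p8 : Practical 12577224 := practical_step (q := 71) p7 (by norm_num) (by norm_num) (by norm_num)
  have p9 : Practical 6879741528 := practical_step (q := 547) p8 (by norm_num) (by norm_num) (by norm_num)
  have p10 : Practical 7519557490104 := practical_step (q := 1093) p9 (by norm_num) (by norm_num) (by norm_num)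
  have p11 : Practical 20032830783819878281224 :=
    practical_step (q := 2664097031) p10 (by norm_num) (by norm_num) (by norm_num)
  exact practical_step (q := 374857981681) p11 (by norm_num) (by norm_num) (by norm_num)

lemma practical_Z0 : Practical (3 * (3 ^ 70 + 1)) := by
  have p2 := practical_two
  have p3 : Practical 6 := practical_step (q := 3) p2 (by norm_num) (by norm_num) (by norm_num)
  have p4 : Practical 30 := practical_step (q := 5) p3 (by norm_num) (by norm_num) (by norm_num)
  have p5 : Practical 150 := practical_step (q := 5) p4 (by norm_num) (by norm_num) (by norm_num)
  have p6 : Practical 4350 := practical_step (q := 29) p5 (by norm_num) (by norm_num) (by norm_num)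
  have p7 : Practical 5137350 := practical_step (q := 1181) p6 (by norm_num) (by norm_num) (by norm_num)
  have p8 : Practical 84730313550 := practical_step (q := 16493) p7 (by norm_num) (by norm_num) (by norm_num)
  have p9 : Practical 2423029472107121550 :=
    practical_step (q := 28596961) p8 (by norm_num) (by norm_num) (by norm_num)
  have p10 : Practical 79571466457006827387794550 :=
    practical_step (q := 32839661) p9 (by norm_num) (by norm_num) (by norm_num)
  exact practical_step (q := 94373861) p10 (by norm_num) (by norm_num) (by norm_num)

lemma step_x {h : ℕ} (hh : 3 ≤ h) (hp : Practical (3 * (h ^ 70 - 1))) :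
    Practical (3 * (h ^ 210 - 1)) := by
  have h1 : 1 ≤ h := by omega
  have P : ∀ a b : ℕ, a ≤ b → h ^ a ≤ h ^ b := fun a b hab => Nat.pow_le_pow_right h1 hab
  have A1 : ∀ c a b : ℕ, c ≤ 3 → a + 1 ≤ b → c * h ^ a ≤ h ^ b := by
    intro c a b hc hab
    calc c * h ^ a ≤ h * h ^ a := Nat.mul_le_mul_right _ (le_trans hc hh)
    _ = h ^ (a + 1) := by ring
    _ ≤ h ^ b := P _ _ hab
  have e0 : 1 ≤ h ^ 35 := Nat.one_le_pow _ _ (by omega)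
  have e35 : 3 * h ^ 35 ≤ h ^ 70 := A1 3 35 70 (by norm_num) (by norm_num)
  have e70 : 3 ≤ h ^ 70 := le_trans hh (Nat.le_self_pow (by norm_num) h)
  have hm : 3 * (h ^ 70 - 1) + 3 = 3 * h ^ 70 := by
    have := Nat.sub_add_cancel (show 1 ≤ h ^ 70 by omega)
    calc 3 * (h ^ 70 - 1) + 3 = 3 * ((h ^ 70 - 1) + 1) := by ring
    _ = 3 * h ^ 70 := by rw [this]
  have hq1 : (h ^ 70 + 1 - h ^ 35) + h ^ 35 = h ^ 70 + 1 := Nat.sub_add_cancel (by omega)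
  have s1 : Practical (3 * (h ^ 70 - 1) * (h ^ 70 + 1 - h ^ 35)) :=
    practical_step hp (by omega) (by omega) rfl
  have hq1l : h ^ 35 + 1 ≤ h ^ 70 + 1 - h ^ 35 := by omega
  have hml : 2 * h ^ 70 ≤ 3 * (h ^ 70 - 1) := by omega
  have hmq : 2 * h ^ 70 * (h ^ 35 + 1) ≤ 3 * (h ^ 70 - 1) * (h ^ 70 + 1 - h ^ 35) :=
    Nat.mul_le_mul hml hq1l
  have s2 : Practical (3 * (h ^ 70 - 1) * (h ^ 70 + 1 - h ^ 35) * (h ^ 70 + h ^ 35 + 1)) := by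
    refine practical_step s1 (by positivity) ?_ rfl
    nlinarith
  have hid : 3 * (h ^ 70 - 1) * (h ^ 70 + 1 - h ^ 35) * (h ^ 70 + h ^ 35 + 1)
      = 3 * (h ^ 210 - 1) := by
    have e210 : 1 ≤ h ^ 210 := Nat.one_le_pow _ _ (by omega)
    zify [show 1 ≤ h ^ 70 by omega, show h ^ 35 ≤ h ^ 70 + 1 by omega, e210]
    ring
  rwa [hid] at s2

set_option maxHeartbeats 2000000 in
lemma step_z {h : ℕ} (hh : 3 ≤ h) (hp : Practical (3 * (h ^ 70 + 1))) :
    Practical (3 * (h ^ 210 + 1)) := by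
  have h1 : 1 ≤ h := by omega
  have P : ∀ a b : ℕ, a ≤ b → h ^ a ≤ h ^ b := fun a b hab => Nat.pow_le_pow_right h1 hab
  have h9 : 9 ≤ h ^ 2 := by nlinarith
  have h27 : 27 ≤ h ^ 3 := by nlinarith
  have A1 : ∀ c a b : ℕ, c ≤ 3 → a + 1 ≤ b → c * h ^ a ≤ h ^ b := by
    intro c a b hc hab
    calc c * h ^ a ≤ h * h ^ a := Nat.mul_le_mul_right _ (le_trans hc hh)
    _ = h ^ (a + 1) := by ring
    _ ≤ h ^ b := P _ _ hab
  have A2 : ∀ c a b : ℕ, c ≤ 9 → a + 2 ≤ b → c * h ^ a ≤ h ^ b := by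
    intro c a b hc hab
    calc c * h ^ a ≤ 9 * h ^ a := Nat.mul_le_mul_right _ hc
    _ ≤ h ^ 2 * h ^ a := Nat.mul_le_mul_right _ h9
    _ = h ^ (a + 2) := by ring
    _ ≤ h ^ b := P _ _ hab
  have A3 : ∀ c a b : ℕ, c ≤ 27 → a + 3 ≤ b → c * h ^ a ≤ h ^ b := by
    intro c a b hc hab
    calc c * h ^ a ≤ 27 * h ^ a := Nat.mul_le_mul_right _ hc
    _ ≤ h ^ 3 * h ^ a := Nat.mul_le_mul_right _ h27
    _ = h ^ (a + 3) := by ring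
    _ ≤ h ^ b := P _ _ hab
  -- subtraction side conditions
  have c1 : h ^ 2 ≤ h ^ 4 + 1 := by have := P 2 4 (by norm_num); omega
  have c2 : h ^ 10 + h ^ 8 + h ^ 6 ≤ h ^ 16 + h ^ 14 + h ^ 2 + 1 := by
    have l1 := P 8 10 (by norm_num); have l2 := P 6 10 (by norm_num)
    have l3 := A1 3 10 16 (by norm_num) (by norm_num); omega
  have c3 : h ^ 18 + h ^ 16 + h ^ 8 + h ^ 6 ≤ h ^ 24 + h ^ 22 + h ^ 12 + h ^ 2 + 1 := by
    have l1 := P 16 18 (by norm_num); have l2 := P 8 18 (by norm_num)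
    have l3 := P 6 18 (by norm_num)
    have l4 := A2 4 18 24 (by norm_num) (by norm_num); omega
  have hN : h ^ 94 + h ^ 84 + h ^ 80 + h ^ 70 + h ^ 66 + h ^ 62 + h ^ 56 + h ^ 52 + h ^ 48 +
      h ^ 44 + h ^ 40 + h ^ 34 + h ^ 30 + h ^ 26 + h ^ 16 + h ^ 12 + h ^ 2 ≤ 2 * h ^ 94 := by
    have l1 := P 80 84 (by norm_num); have l2 := P 70 84 (by norm_num)
    have l3 := P 66 84 (by norm_num); have l4 := P 62 84 (by norm_num)
    have l5 := P 56 84 (by norm_num); have l6 := P 52 84 (by norm_num)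
    have l7 := P 48 84 (by norm_num); have l8 := P 44 84 (by norm_num)
    have l9 := P 40 84 (by norm_num); have l10 := P 34 84 (by norm_num)
    have l11 := P 30 84 (by norm_num); have l12 := P 26 84 (by norm_num)
    have l13 := P 16 84 (by norm_num); have l14 := P 12 84 (by norm_num)
    have l15 := P 2 84 (by norm_num)
    have l16 := A3 16 84 94 (by norm_num) (by norm_num)
    omega
  have h96 : 9 * h ^ 94 ≤ h ^ 96 := A2 9 94 96 (by norm_num) (by norm_num)
  have c4 : h ^ 94 + h ^ 84 + h ^ 80 + h ^ 70 + h ^ 66 + h ^ 62 + h ^ 56 + h ^ 52 + h ^ 48 +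
      h ^ 44 + h ^ 40 + h ^ 34 + h ^ 30 + h ^ 26 + h ^ 16 + h ^ 12 + h ^ 2 ≤
      h ^ 96 + h ^ 92 + h ^ 86 + 2 * h ^ 82 + h ^ 78 + h ^ 72 + h ^ 68 + h ^ 64 + h ^ 32 +
      h ^ 28 + h ^ 24 + h ^ 18 + 2 * h ^ 14 + h ^ 10 + h ^ 4 + 1 := by omega
  obtain ⟨q1, hq1⟩ : ∃ q1, q1 + h ^ 2 = h ^ 4 + 1 := ⟨_, Nat.sub_add_cancel c1⟩
  obtain ⟨q2, hq2⟩ : ∃ q2, q2 + (h ^ 10 + h ^ 8 + h ^ 6) = h ^ 16 + h ^ 14 + h ^ 2 + 1 :=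
    ⟨_, Nat.sub_add_cancel c2⟩
  obtain ⟨q3, hq3⟩ :
      ∃ q3, q3 + (h ^ 18 + h ^ 16 + h ^ 8 + h ^ 6) = h ^ 24 + h ^ 22 + h ^ 12 + h ^ 2 + 1 :=
    ⟨_, Nat.sub_add_cancel c3⟩
  obtain ⟨q4, hq4⟩ : ∃ q4, q4 + (h ^ 94 + h ^ 84 + h ^ 80 + h ^ 70 + h ^ 66 + h ^ 62 + h ^ 56 +
      h ^ 52 + h ^ 48 + h ^ 44 + h ^ 40 + h ^ 34 + h ^ 30 + h ^ 26 + h ^ 16 + h ^ 12 + h ^ 2) =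
      h ^ 96 + h ^ 92 + h ^ 86 + 2 * h ^ 82 + h ^ 78 + h ^ 72 + h ^ 68 + h ^ 64 + h ^ 32 +
      h ^ 28 + h ^ 24 + h ^ 18 + 2 * h ^ 14 + h ^ 10 + h ^ 4 + 1 :=
    ⟨_, Nat.sub_add_cancel c4⟩
  -- lower bounds for the q_i
  have q1l : h ^ 3 ≤ q1 := by
    have l1 := A1 2 3 4 (by norm_num) (by norm_num); have l2 := P 2 3 (by norm_num); omega
  have q2l : h ^ 14 ≤ q2 := by
    have l1 := P 8 10 (by norm_num); have l2 := P 6 10 (by norm_num)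
    have l3 := A1 3 10 16 (by norm_num) (by norm_num); omega
  have q3l : h ^ 20 ≤ q3 := by
    have l1 := P 16 18 (by norm_num); have l2 := P 8 18 (by norm_num)
    have l3 := P 6 18 (by norm_num)
    have l4 := A2 4 18 20 (by norm_num) (by norm_num)
    have l5 := A1 2 20 21 (by norm_num) (by norm_num)
    have l6 := P 21 24 (by norm_num); omega
  have q4l : h ^ 94 ≤ q4 := by omega
  -- partial product lower bounds
  have hmq1 : 3 * h ^ 73 ≤ 3 * (h ^ 70 + 1) * q1 := by
    calc 3 * h ^ 73 = 3 * h ^ 70 * h ^ 3 := by ring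
    _ ≤ 3 * (h ^ 70 + 1) * q1 := Nat.mul_le_mul (by omega) q1l
  have hmq2 : 3 * h ^ 87 ≤ 3 * (h ^ 70 + 1) * q1 * q2 := by
    calc 3 * h ^ 87 = 3 * h ^ 73 * h ^ 14 := by ring
    _ ≤ 3 * (h ^ 70 + 1) * q1 * q2 := Nat.mul_le_mul hmq1 q2l
  have hmq3 : 3 * h ^ 107 ≤ 3 * (h ^ 70 + 1) * q1 * q2 * q3 := by
    calc 3 * h ^ 107 = 3 * h ^ 87 * h ^ 20 := by ring
    _ ≤ 3 * (h ^ 70 + 1) * q1 * q2 * q3 := Nat.mul_le_mul hmq2 q3l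
  -- the chain of practical steps
  have s1 : Practical (3 * (h ^ 70 + 1) * q1) := by
    refine practical_step hp (by omega) ?_ rfl
    have := P 4 70 (by norm_num); omega
  have e14 : 1 ≤ h ^ 14 := Nat.one_le_pow _ _ (by omega)
  have e20 : 1 ≤ h ^ 20 := Nat.one_le_pow _ _ (by omega)
  have e94 : 1 ≤ h ^ 94 := Nat.one_le_pow _ _ (by omega)
  have s2 : Practical (3 * (h ^ 70 + 1) * q1 * q2) := by
    refine practical_step s1 (by omega) ?_ rfl
    have l1 := P 14 16 (by norm_num); have l2 := P 2 16 (by norm_num)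
    have l3 : 1 ≤ h ^ 16 := Nat.one_le_pow _ _ (by omega)
    have l4 := A2 4 16 18 (by norm_num) (by norm_num)
    have l5 := P 18 73 (by norm_num)
    omega
  have s3 : Practical (3 * (h ^ 70 + 1) * q1 * q2 * q3) := by
    refine practical_step s2 (by omega) ?_ rfl
    have l1 := P 22 24 (by norm_num); have l2 := P 12 24 (by norm_num)
    have l3 := P 2 24 (by norm_num)
    have l4 : 1 ≤ h ^ 24 := Nat.one_le_pow _ _ (by omega)
    have l5 := A2 5 24 26 (by norm_num) (by norm_num)
    have l6 := P 26 87 (by norm_num)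
    omega
  have s4 : Practical (3 * (h ^ 70 + 1) * q1 * q2 * q3 * q4) := by
    refine practical_step s3 (by omega) ?_ rfl
    have l1 := P 92 96 (by norm_num)
    have l2 := P 86 92 (by norm_num); have l3 := P 82 92 (by norm_num)
    have l4 := P 78 92 (by norm_num); have l5 := P 72 92 (by norm_num)
    have l6 := P 68 92 (by norm_num); have l7 := P 64 92 (by norm_num)
    have l8 := P 32 92 (by norm_num); have l9 := P 28 92 (by norm_num)
    have l10 := P 24 92 (by norm_num); have l11 := P 18 92 (by norm_num)
    have l12 := P 14 92 (by norm_num); have l13 := P 10 92 (by norm_num)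
    have l14 := P 4 92 (by norm_num)
    have l15 : 1 ≤ h ^ 92 := Nat.one_le_pow _ _ (by omega)
    have l16 := A3 17 92 95 (by norm_num) (by norm_num)
    have l17 := A1 2 96 97 (by norm_num) (by norm_num)
    have l18 := P 95 96 (by norm_num)
    have l19 := P 97 107 (by norm_num)
    omega
  have hid : 3 * (h ^ 70 + 1) * q1 * q2 * q3 * q4 = 3 * (h ^ 210 + 1) := by
    have z1 : (q1 : ℤ) = (h : ℤ) ^ 4 + 1 - (h : ℤ) ^ 2 := by
      have := congrArg (Nat.cast : ℕ → ℤ) hq1; push_cast at this; linarith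
    have z2 : (q2 : ℤ) = (h : ℤ) ^ 16 + (h : ℤ) ^ 14 + (h : ℤ) ^ 2 + 1 -
        ((h : ℤ) ^ 10 + (h : ℤ) ^ 8 + (h : ℤ) ^ 6) := by
      have := congrArg (Nat.cast : ℕ → ℤ) hq2; push_cast at this; linarith
    have z3 : (q3 : ℤ) = (h : ℤ) ^ 24 + (h : ℤ) ^ 22 + (h : ℤ) ^ 12 + (h : ℤ) ^ 2 + 1 -
        ((h : ℤ) ^ 18 + (h : ℤ) ^ 16 + (h : ℤ) ^ 8 + (h : ℤ) ^ 6) := by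
      have := congrArg (Nat.cast : ℕ → ℤ) hq3; push_cast at this; linarith
    have z4 : (q4 : ℤ) = (h : ℤ) ^ 96 + (h : ℤ) ^ 92 + (h : ℤ) ^ 86 + 2 * (h : ℤ) ^ 82 +
        (h : ℤ) ^ 78 + (h : ℤ) ^ 72 + (h : ℤ) ^ 68 + (h : ℤ) ^ 64 + (h : ℤ) ^ 32 +
        (h : ℤ) ^ 28 + (h : ℤ) ^ 24 + (h : ℤ) ^ 18 + 2 * (h : ℤ) ^ 14 + (h : ℤ) ^ 10 +
        (h : ℤ) ^ 4 + 1 -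
        ((h : ℤ) ^ 94 + (h : ℤ) ^ 84 + (h : ℤ) ^ 80 + (h : ℤ) ^ 70 + (h : ℤ) ^ 66 +
        (h : ℤ) ^ 62 + (h : ℤ) ^ 56 + (h : ℤ) ^ 52 + (h : ℤ) ^ 48 + (h : ℤ) ^ 44 +
        (h : ℤ) ^ 40 + (h : ℤ) ^ 34 + (h : ℤ) ^ 30 + (h : ℤ) ^ 26 + (h : ℤ) ^ 16 +
        (h : ℤ) ^ 12 + (h : ℤ) ^ 2) := by
      have := congrArg (Nat.cast : ℕ → ℤ) hq4; push_cast at this; linarith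
    zify
    rw [z1, z2, z3, z4]
    ring
  rwa [hid] at s4

lemma practical_two_mul_pow (n : ℕ) : Practical (2 * 3 ^ n) := by
  induction n with
  | zero => simpa using practical_two
  | succ n ih =>
      have h3 : 1 ≤ (3:ℕ) ^ n := Nat.one_le_pow _ _ (by norm_num)
      exact practical_step (q := 3) ih (by norm_num) (by omega) (by ring)

lemma practical_yk (k : ℕ) : Practical (6 * 3 ^ (3 ^ k * 35)) := by
  have := practical_two_mul_pow (3 ^ k * 35 + 1)
  rwa [show 2 * 3 ^ (3 ^ k * 35 + 1) = 6 * 3 ^ (3 ^ k * 35) by rw [pow_succ]; ring] at this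

lemma hh_le (k : ℕ) : 3 ≤ 3 ^ 3 ^ k := by
  calc (3:ℕ) = 3 ^ 1 := (pow_one 3).symm
  _ ≤ 3 ^ 3 ^ k := Nat.pow_le_pow_right (by norm_num) (Nat.one_le_pow _ _ (by norm_num))

lemma exp_succ (k : ℕ) : (3:ℕ) ^ (3 ^ (k + 1) * 70) = (3 ^ 3 ^ k) ^ 210 := by
  rw [← pow_mul]
  congr 1
  rw [pow_succ]
  ring

lemma practical_xk (k : ℕ) : Practical (3 * (3 ^ (3 ^ k * 70) - 1)) := by
  induction k with
  | zero => simpa using practical_X0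
  | succ k ih =>
      rw [exp_succ]
      rw [show (3:ℕ) ^ (3 ^ k * 70) = (3 ^ 3 ^ k) ^ 70 from pow_mul 3 _ 70] at ih
      exact step_x (hh_le k) ih

lemma practical_zk (k : ℕ) : Practical (3 * (3 ^ (3 ^ k * 70) + 1)) := by
  induction k with
  | zero => simpa using practical_Z0
  | succ k ih =>
      rw [exp_succ]
      rw [show (3:ℕ) ^ (3 ^ k * 70) = (3 ^ 3 ^ k) ^ 70 from pow_mul 3 _ 70] at ih
      exact step_z (hh_le k) ih

lemma hM (k : ℕ) : (3:ℕ) ^ (3 ^ k * 70) = (3 ^ (3 ^ k * 35)) ^ 2 := by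
  rw [← pow_mul]
  congr 1
  ring

lemma pyth (k : ℕ) : (3 * (3 ^ (3 ^ k * 70) - 1)) ^ 2 + (6 * 3 ^ (3 ^ k * 35)) ^ 2
    = (3 * (3 ^ (3 ^ k * 70) + 1)) ^ 2 := by
  rw [hM]
  have h1 : 1 ≤ ((3:ℕ) ^ (3 ^ k * 35)) ^ 2 := Nat.one_le_pow _ _ (by positivity)
  zify [h1]
  ring

lemma gcd6 (k : ℕ) : Nat.gcd (3 * (3 ^ (3 ^ k * 70) - 1))
    (Nat.gcd (6 * 3 ^ (3 ^ k * 35)) (3 * (3 ^ (3 ^ k * 70) + 1))) = 6 := by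
  rw [hM]
  set c : ℕ := 3 ^ (3 ^ k * 35) with hc
  have hodd : Odd c := Odd.pow ⟨1, by norm_num⟩
  have hodd2 : Odd (c ^ 2) := hodd.pow
  have hc1 : 1 ≤ c := Nat.one_le_pow _ _ (by norm_num)
  have h3c : 3 ∣ c := by
    rw [hc]
    exact dvd_pow_self 3 (by positivity)
  obtain ⟨w, hw⟩ : Even (c ^ 2 + 1) := Odd.add_one hodd2
  have hzw : 3 * (c ^ 2 + 1) = 6 * w := by omega
  have hgyz : Nat.gcd (6 * c) (3 * (c ^ 2 + 1)) = 6 := by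
    rw [hzw, Nat.gcd_mul_left]
    have hcw : Nat.Coprime c w := by
      have h3w : ¬ (3 ∣ w) := by
        intro hdvd
        have h3c2 : 3 ∣ c ^ 2 := Dvd.dvd.pow h3c (by norm_num)
        omega
      have : Nat.Coprime 3 w := (Nat.Prime.coprime_iff_not_dvd (by norm_num)).mpr h3w
      rw [hc]
      exact Nat.Coprime.pow_left _ this
    rw [hcw]
  rw [hgyz]
  obtain ⟨v, hv⟩ : Even (c ^ 2 - 1) := Nat.Odd.sub_odd hodd2 odd_one
  have hxv : 3 * (c ^ 2 - 1) = 6 * v := by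
    have : 1 ≤ c ^ 2 := Nat.one_le_pow _ _ (by omega)
    omega
  rw [hxv, Nat.gcd_comm]
  exact Nat.gcd_eq_left ⟨v, rfl⟩

theorem practical_pythagorean_gcd_six :
    {t : ℕ × ℕ × ℕ | 0 < t.1 ∧ 0 < t.2.1 ∧ 0 < t.2.2 ∧
      t.1 ^ 2 + t.2.1 ^ 2 = t.2.2 ^ 2 ∧
      Practical t.1 ∧ Practical t.2.1 ∧ Practical t.2.2 ∧
      Nat.gcd t.1 (Nat.gcd t.2.1 t.2.2) = 6}.Infinite ∧
    ∀ k : ℕ,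
      (3 * (3 ^ (3 ^ k * 70) - 1)) ^ 2 + (6 * 3 ^ (3 ^ k * 35)) ^ 2
        = (3 * (3 ^ (3 ^ k * 70) + 1)) ^ 2 ∧
      Nat.gcd (3 * (3 ^ (3 ^ k * 70) - 1))
        (Nat.gcd (6 * 3 ^ (3 ^ k * 35)) (3 * (3 ^ (3 ^ k * 70) + 1))) = 6 ∧
      Practical (3 * (3 ^ (3 ^ k * 70) - 1)) ∧
      Practical (6 * 3 ^ (3 ^ k * 35)) ∧
      Practical (3 * (3 ^ (3 ^ k * 70) + 1)) := by
  constructor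
  · apply Set.infinite_of_injective_forall_mem
      (f := fun k : ℕ => ((3 * (3 ^ (3 ^ k * 70) - 1) : ℕ),
        ((6 * 3 ^ (3 ^ k * 35) : ℕ), (3 * (3 ^ (3 ^ k * 70) + 1) : ℕ))))
    · intro a b hab
      simp only [Prod.mk.injEq] at hab
      obtain ⟨-, h2, -⟩ := hab
      have h3 : (3:ℕ) ^ (3 ^ a * 35) = 3 ^ (3 ^ b * 35) :=
        Nat.eq_of_mul_eq_mul_left (by norm_num) h2
      have h4 : 3 ^ a * 35 = 3 ^ b * 35 := Nat.pow_right_injective (by norm_num) h3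
      have h5 : (3:ℕ) ^ a = 3 ^ b := by omega
      exact Nat.pow_right_injective (by norm_num) h5
    · intro k
      refine ⟨(practical_xk k).1, (practical_yk k).1, (practical_zk k).1,
        pyth k, practical_xk k, practical_yk k, practical_zk k, gcd6 k⟩
  · exact fun k => ⟨pyth k, gcd6 k, practical_xk k, practical_yk k, practical_zk k⟩
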